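/- Let (mu, alpha) be a pair of binary sequences in V'_2 such that sigma^m(mu) = alpha and sigma^n(alpha) = mu for some positive integers m, n. Then (mu, alpha) is an isolated point of V'_2: there exists epsilon > 0 such that any (mu', alpha') in V'_2 within distance epsilon of (mu, alpha) equals (mu, alpha). -/

import Mathlib

/-- The one-sided left shift on binary sequences. -/
def shift (x : ℕ → Bool) : ℕ → Bool := fun n => x (n + 1)

/-- Strict lexicographic order on binary sequences (`false < true`). -/
def lexLt (x y : ℕ → Bool) : Prop :=
  ∃ k : ℕ, (∀ i < k, x i = y i) ∧ x k < y k

/-- Non-strict lexicographic order on binary sequences. -/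
def lexLe (x y : ℕ → Bool) : Prop := lexLt x y ∨ x = y

/-- The symbolic set `V'_2`. -/
def V2' : Set ((ℕ → Bool) × (ℕ → Bool)) :=
  {p | p.1 0 = false ∧ p.2 0 = true ∧
    (∀ m : ℕ, lexLe p.1 (shift^[m] p.1) ∧ lexLe (shift^[m] p.1) p.2) ∧
    (∀ n : ℕ, lexLe p.1 (shift^[n] p.2) ∧ lexLe (shift^[n] p.2) p.2)}

open Classical in
/-- The metric `d((c_i),(e_i)) = 2^{-min{i : c_i ≠ e_i}}` on binary sequences. -/
noncomputable def seqDist (x y : ℕ → Bool) : ℝ :=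
  if h : x = y then 0
  else (2 : ℝ)⁻¹ ^ Nat.find (show ∃ i, x i ≠ y i by
    by_contra hc
    push_neg at hc
    exact h (funext hc))

/-!
Since `σ^m μ = α` and `σ^n α = μ`, both sequences are periodic with period `P = m + n`.
Let `(x, y) ∈ V'_2` agree with `(μ, α)` on the first `P` symbols and let `j ≥ P` be the first
index with `x j ≠ μ j`. If `μ j = 1`, shifting `x` by the multiple of `P` that brings `j` into
`[0, P)` produces a sequence lexicographically below `x`; if `μ j = 0`, shifting `x` so that it
lines up with `σ^m μ = α` produces a sequence above `y`. Both contradict `(x, y) ∈ V'_2`, so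
`x = μ`; the case of `y` is the same argument after flipping all bits, which reverses the
lexicographic order and swaps the roles of `x` and `y`.
-/

theorem shift_iterate_apply (x : ℕ → Bool) (k i : ℕ) : shift^[k] x i = x (i + k) := by
  induction k generalizing x with
  | zero => rfl
  | succ k ih => rw [Function.iterate_succ_apply, ih]; rfl

theorem periodic_of_shift_iterate_eq {x : ℕ → Bool} {P : ℕ} (h : shift^[P] x = x) :
    Function.Periodic x P := fun i => by
  rw [← congrFun h i, shift_iterate_apply]

theorem not_comp_shift_iterate (x : ℕ → Bool) (k : ℕ) :
    shift^[k] (not ∘ x) = not ∘ shift^[k] x := by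
  funext i
  simp only [shift_iterate_apply, Function.comp_apply]

theorem not_lexLt_of_lexLe {x y : ℕ → Bool} (h : lexLe x y) : ¬ lexLt y x := by
  rintro ⟨k, hk, hlt⟩
  rcases h with ⟨k', hk', hlt'⟩ | rfl
  · rcases lt_trichotomy k k' with hkk' | rfl | hk'k
    · exact hlt.ne (hk' k hkk').symm
    · exact lt_asymm hlt hlt'
    · exact hlt'.ne (hk k' hk'k).symm
  · exact lt_irrefl _ hlt

theorem lexLe_not_comp {x y : ℕ → Bool} (h : lexLe x y) : lexLe (not ∘ y) (not ∘ x) := by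
  rcases h with ⟨k, hk, hlt⟩ | rfl
  · refine Or.inl ⟨k, fun i hi => by simp [hk i hi], ?_⟩
    simp only [Function.comp_apply]
    revert hlt
    cases x k <;> cases y k <;> decide
  · exact Or.inr rfl

theorem eq_of_seqDist_lt {x y : ℕ → Bool} {N : ℕ} (h : seqDist x y < (2 : ℝ)⁻¹ ^ N) :
    ∀ i < N, x i = y i := by
  intro i hi
  by_contra hne
  have hex : ∃ i, x i ≠ y i := ⟨i, hne⟩
  have hdist : seqDist x y = (2 : ℝ)⁻¹ ^ Nat.find hex := by
    rw [seqDist, dif_neg fun he => hne (congrFun he i)]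
  have hNj : N < Nat.find hex := by
    by_contra! hle
    rw [hdist] at h
    exact h.not_ge (pow_le_pow_of_le_one (by norm_num) (by norm_num) hle)
  exact Nat.find_min hex (hi.trans hNj) hne

theorem Function.Periodic.exists_sub_lt_eq_add {α : Type*} {μ : ℕ → α} {P c j : ℕ} (hP : 0 < P)
    (hμ : Function.Periodic μ P) (hcj : c ≤ j) :
    ∃ s < P, s ≤ j ∧ ∀ i, μ (i + (j - s)) = μ (i + c) := by
  refine ⟨(j - c) % P, Nat.mod_lt _ hP, (Nat.mod_le _ _).trans (Nat.sub_le _ _), fun i => ?_⟩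
  have hdiv := Nat.mod_add_div (j - c) P
  rw [← hμ.nat_mul ((j - c) / P) (i + c), Nat.cast_id]
  congr 1
  rw [mul_comm]
  omega

theorem eq_of_forall_lexLe_shift_iterate {μ x y : ℕ → Bool} {P m : ℕ} (hP : 0 < P) (hmP : m ≤ P)
    (hμ : Function.Periodic μ P) (hxμ : ∀ i < P, x i = μ i) (hyμ : ∀ i < P, y i = μ (i + m))
    (hx : ∀ k, lexLe x (shift^[k] x) ∧ lexLe (shift^[k] x) y) : x = μ := by
  by_contra hne
  have hex : ∃ j, x j ≠ μ j := Function.ne_iff.mp hne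
  set j := Nat.find hex
  have hj : x j ≠ μ j := Nat.find_spec hex
  have hbelow : ∀ i < j, x i = μ i := fun i hi => not_not.mp (Nat.find_min hex hi)
  have hPj : P ≤ j := not_lt.mp fun hjP => hj (hxμ j hjP)
  cases hμj : μ j with
  | false =>
    have hxj : x j = true := by simpa [hμj] using hj
    obtain ⟨s, hsP, hsj, hμs⟩ := hμ.exists_sub_lt_eq_add hP (hmP.trans hPj)
    refine not_lexLt_of_lexLe (hx (j - s)).2 ⟨s, fun i hi => ?_, ?_⟩
    · rw [shift_iterate_apply, hbelow _ (by omega), hyμ i (by omega), hμs]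
    · rw [shift_iterate_apply, Nat.add_sub_cancel' hsj, hxj, hyμ s hsP, ← hμs,
        Nat.add_sub_cancel' hsj, hμj]
      decide
  | true =>
    have hxj : x j = false := by simpa [hμj] using hj
    obtain ⟨r, hrP, hrj, hμr⟩ := hμ.exists_sub_lt_eq_add hP (Nat.zero_le j)
    simp only [Nat.add_zero] at hμr
    refine not_lexLt_of_lexLe (hx (j - r)).1 ⟨r, fun i hi => ?_, ?_⟩
    · rw [shift_iterate_apply, hbelow _ (by omega), hxμ i (by omega), hμr]
    · rw [shift_iterate_apply, Nat.add_sub_cancel' hrj, hxj, hxμ r hrP, ← hμr,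
        Nat.add_sub_cancel' hrj, hμj]
      decide

theorem stmt8_general (mu alpha : ℕ → Bool)
    (m n : ℕ) (hm : 1 ≤ m)
    (h1 : shift^[m] mu = alpha) (h2 : shift^[n] alpha = mu) :
    ∃ ε > (0 : ℝ), ∀ p ∈ V2',
      max (seqDist p.1 mu) (seqDist p.2 alpha) < ε → p = (mu, alpha) := by
  have hP : 0 < m + n := by omega
  have hmu : Function.Periodic mu (m + n) :=
    periodic_of_shift_iterate_eq (by rw [add_comm, Function.iterate_add_apply, h1, h2])
  have halpha : Function.Periodic alpha (m + n) :=
    periodic_of_shift_iterate_eq (by rw [Function.iterate_add_apply, h2, h1])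
  refine ⟨(2 : ℝ)⁻¹ ^ (m + n), by positivity, ?_⟩
  rintro ⟨x, y⟩ ⟨-, -, hx, hy⟩ hd
  dsimp only at hx hy hd
  have hxmu := eq_of_seqDist_lt (lt_of_le_of_lt (le_max_left _ _) hd)
  have hyalpha := eq_of_seqDist_lt (lt_of_le_of_lt (le_max_right _ _) hd)
  have hx_eq : x = mu := eq_of_forall_lexLe_shift_iterate (m := m) hP (by omega) hmu hxmu
    (fun i hi => by rw [hyalpha i hi, ← h1, shift_iterate_apply]) hx
  have hy_eq : not ∘ y = not ∘ alpha :=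
    eq_of_forall_lexLe_shift_iterate (m := n) (x := not ∘ y) (y := not ∘ x) hP (by omega)
    (fun i => by simp [halpha i]) (fun i hi => by simp [hyalpha i hi])
    (fun i hi => by simp [hxmu i hi, ← h2, shift_iterate_apply, add_comm])
    (fun k => by
      rw [not_comp_shift_iterate]
      exact ⟨lexLe_not_comp (hy k).2, lexLe_not_comp (hy k).1⟩)
  rw [hx_eq, Bool.not_injective.comp_left hy_eq]

/-- If `σ^m(mu) = alpha` and `σ^n(alpha) = mu` for some `m, n ≥ 1`, then
`(mu, alpha)` is an isolated point of `V'_2` (for the max metric). -/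
theorem stmt8 (mu alpha : ℕ → Bool) (h : (mu, alpha) ∈ V2')
    (m n : ℕ) (hm : 1 ≤ m) (hn : 1 ≤ n)
    (h1 : shift^[m] mu = alpha) (h2 : shift^[n] alpha = mu) :
    ∃ ε > (0 : ℝ), ∀ p ∈ V2',
      max (seqDist p.1 mu) (seqDist p.2 alpha) < ε → p = (mu, alpha) :=
  stmt8_general mu alpha m n hm h1 h2
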